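/- arXiv:1609.02813 — 5 statements merged into one kernel-verified Lean document; each statement's English description precedes it below -/
import Mathlib

section
/- Let U ⊆ ℝⁿ be a bounded open set and let f : ℝⁿ → ℝ be integrable on U. Let 𝒜 be the set of all functions w : ℝⁿ → ℝ that are 1-Lipschitz (with respect to the Euclidean distance) and vanish at every point of the complement of U. Then the Kantorovich functional K[w] := ∫_U w f dx attains its supremum over 𝒜, i.e. there exists u ∈ 𝒜 with ∫_U u f dx = sup_{w ∈ 𝒜} ∫_U w f dx. -/
/-!
The admissible functions are uniformly bounded (each vanishes at a fixed point outside the bounded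
set `U`) and form a pointwise closed set, so by Tychonoff they are compact for the topology of
pointwise convergence. Being equicontinuous, they converge uniformly on the compact set
`closure U` as soon as they converge pointwise (Arzelà–Ascoli), so the functional
`w ↦ ∫_U w f` is continuous on them and attains its maximum.
-/

open MeasureTheory Filter Topology Set Metric

section Admissible

variable {X : Type*} [PseudoMetricSpace X]

def kantorovichAdmissible (U : Set X) : Set (X → ℝ) :=
  {w | LipschitzWith 1 w ∧ ∀ x ∉ U, w x = 0}

theorem isClosed_kantorovichAdmissible (U : Set X) : IsClosed (kantorovichAdmissible U) := by
  have hvanish : IsClosed {w : X → ℝ | ∀ x ∉ U, w x = 0} := by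
    simp only [ofPred_forall]
    exact isClosed_iInter fun x => isClosed_iInter fun _ =>
      isClosed_eq (continuous_apply x) continuous_const
  exact (isClosed_setOfPred_lipschitzWith 1).inter hvanish

theorem abs_le_dist_of_mem_kantorovichAdmissible {U : Set X} {w : X → ℝ}
    (hw : w ∈ kantorovichAdmissible U) {y : X} (hy : y ∉ U) (x : X) : |w x| ≤ dist x y := by
  simpa [hw.2 y hy, Real.dist_eq] using hw.1.dist_le_mul x y

theorem isCompact_kantorovichAdmissible {U : Set X} (hU : Bornology.IsBounded U)
    (hUc : Uᶜ.Nonempty) : IsCompact (kantorovichAdmissible U) := by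
  obtain ⟨y, hy⟩ := hUc
  obtain ⟨r, hr, hUr⟩ := hU.subset_closedBall_lt 0 y
  refine (isCompact_univ_pi fun _ => isCompact_Icc (a := -r) (b := r)).of_isClosed_subset
    (isClosed_kantorovichAdmissible U) fun w hw x _ => abs_le.1 ?_
  by_cases hx : x ∈ U
  · exact (abs_le_dist_of_mem_kantorovichAdmissible hw hy x).trans (hUr hx)
  · simp [hw.2 x hx, hr.le]

theorem zero_mem_kantorovichAdmissible (U : Set X) : 0 ∈ kantorovichAdmissible U :=
  ⟨(LipschitzWith.const 0).weaken zero_le_one, fun _ _ => rfl⟩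

end Admissible

theorem Equicontinuous.tendstoUniformlyOn_of_tendsto {ι X α : Type*} [TopologicalSpace X]
    [UniformSpace α] {F : ι → X → α} (hF : Equicontinuous F) {p : Filter ι} {f : X → α}
    (hFf : Tendsto F p (𝓝 f)) {s : Set X} (hs : IsCompact s) :
    TendstoUniformlyOn F f p s := by
  have hpi : Tendsto ((⋃₀ {s}).domRestrict ∘ F) p (𝓝 ((⋃₀ {s}).domRestrict f)) :=
    ((Pi.continuous_domRestrict _).tendsto f).comp hFf
  have hconv := (EquicontinuousOn.tendsto_uniformOnFun_iff_pi' (by simpa)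
    (by simpa using hF.equicontinuousOn s) p f).2 hpi
  exact UniformOnFun.tendsto_iff_tendstoUniformlyOn.1 hconv s rfl

section Functional

variable {X : Type*} [MeasurableSpace X] {μ : Measure X}

theorem tendsto_setIntegral_mul_of_tendstoUniformlyOn {ι : Type*} {p : Filter ι}
    {F : ι → X → ℝ} {g f : X → ℝ} {s : Set X} (hs : MeasurableSet s) (hf : IntegrableOn f s μ)
    (hgf : IntegrableOn (fun x => g x * f x) s μ)
    (hFm : ∀ᶠ i in p, AEStronglyMeasurable (F i) (μ.restrict s))
    (hgm : AEStronglyMeasurable g (μ.restrict s)) (hFg : TendstoUniformlyOn F g p s) :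
    Tendsto (fun i => ∫ x in s, F i x * f x ∂μ) p (𝓝 (∫ x in s, g x * f x ∂μ)) := by
  rw [Metric.tendsto_nhds]
  intro ε hε
  set I := ∫ x in s, |f x| ∂μ
  have hI : 0 ≤ I := integral_nonneg fun x => abs_nonneg _
  have hη : 0 < ε / (I + 1) := by positivity
  filter_upwards [Metric.tendstoUniformlyOn_iff.1 hFg _ hη, hFm] with i hclose hmeas
  have hbound : ∀ᵐ x ∂μ.restrict s, ‖F i x - g x‖ ≤ ε / (I + 1) :=
    ae_restrict_of_forall_mem hs fun x hx => by
      rw [← dist_eq_norm, dist_comm]; exact (hclose x hx).le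
  have hdiff : IntegrableOn (fun x => (F i x - g x) * f x) s μ :=
    hf.bdd_mul (hmeas.sub hgm) hbound
  have hFf : IntegrableOn (fun x => F i x * f x) s μ :=
    (hdiff.add hgf).congr_fun (fun x _ => by simp only [Pi.add_apply]; ring) hs
  have hsplit : ∫ x in s, F i x * f x ∂μ - ∫ x in s, g x * f x ∂μ
      = ∫ x in s, (F i x - g x) * f x ∂μ := by
    rw [← integral_sub hFf hgf]
    simp only [sub_mul]
  calc dist (∫ x in s, F i x * f x ∂μ) (∫ x in s, g x * f x ∂μ)
      = ‖∫ x in s, (F i x - g x) * f x ∂μ‖ := by rw [dist_eq_norm, hsplit]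
    _ ≤ ∫ x in s, ε / (I + 1) * |f x| ∂μ := by
      refine norm_integral_le_of_norm_le (hf.abs.const_mul _) ?_
      filter_upwards [hbound] with x hx
      rw [norm_mul, Real.norm_eq_abs]
      exact mul_le_mul_of_nonneg_right hx (abs_nonneg _)
    _ = ε / (I + 1) * I := integral_const_mul _ _
    _ < ε := by
      rw [div_mul_eq_mul_div, div_lt_iff₀ (by positivity)]
      nlinarith

variable [PseudoMetricSpace X] [ProperSpace X] [OpensMeasurableSpace X]

theorem continuousOn_setIntegral_mul_of_lipschitzWith {U : Set X} (hU : MeasurableSet U)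
    (hUb : Bornology.IsBounded U) {f : X → ℝ} (hf : IntegrableOn f U μ) (K : NNReal) :
    ContinuousOn (fun w : X → ℝ => ∫ x in U, w x * f x ∂μ) {w | LipschitzWith K w} := by
  rw [continuousOn_iff_continuous_domRestrict, continuous_iff_continuousAt]
  rintro ⟨w₀, hw₀⟩
  have hequi : Equicontinuous (fun w : {w : X → ℝ | LipschitzWith K w} => (w : X → ℝ)) :=
    (LipschitzWith.uniformEquicontinuous _ K fun w => w.2).equicontinuous
  have hunif : TendstoUniformlyOn (fun w : {w : X → ℝ | LipschitzWith K w} => (w : X → ℝ)) w₀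
      (𝓝 ⟨w₀, hw₀⟩) U := (hequi.tendstoUniformlyOn_of_tendsto continuous_subtype_val.continuousAt
    hUb.isCompact_closure).mono subset_closure
  exact tendsto_setIntegral_mul_of_tendstoUniformlyOn hU hf
    (hf.continuousOn_mul_of_subset hw₀.continuous.continuousOn hUb.isCompact_closure hU
      subset_closure)
    (Eventually.of_forall fun w => w.2.continuous.aestronglyMeasurable)
    hw₀.continuous.aestronglyMeasurable hunif

end Functional

/-- Existence of a Kantorovich potential (Theorem 1.2): the Kantorovich functional
`K[w] = ∫_U w f` attains its supremum over the admissible set of 1-Lipschitz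
functions vanishing outside the bounded open set `U`. -/
theorem kantorovich_potential_exists (n : ℕ) (hn : 1 ≤ n)
    (U : Set (EuclideanSpace ℝ (Fin n))) (hUopen : IsOpen U)
    (hUbdd : Bornology.IsBounded U)
    (f : EuclideanSpace ℝ (Fin n) → ℝ) (hf : IntegrableOn f U) :
    ∃ u : EuclideanSpace ℝ (Fin n) → ℝ,
      (LipschitzWith 1 u ∧ ∀ x ∉ U, u x = 0) ∧
      ∫ x in U, u x * f x =
        sSup ((fun w : EuclideanSpace ℝ (Fin n) → ℝ => ∫ x in U, w x * f x) ''
          {w | LipschitzWith 1 w ∧ ∀ x ∉ U, w x = 0}) := by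
  have : Nontrivial (EuclideanSpace ℝ (Fin n)) :=
    Module.nontrivial_of_finrank_pos (R := ℝ) (by rw [finrank_euclideanSpace_fin]; omega)
  have hUc : Uᶜ.Nonempty := nonempty_compl.2 fun h => NormedSpace.unbounded_univ ℝ _ (h ▸ hUbdd)
  have hcont := (continuousOn_setIntegral_mul_of_lipschitzWith (μ := volume)
    hUopen.measurableSet hUbdd hf 1).mono fun w (hw : w ∈ kantorovichAdmissible U) => hw.1
  obtain ⟨u, hu, hmax⟩ := ((isCompact_kantorovichAdmissible hUbdd hUc).image_of_continuousOn
    hcont).sSup_mem ⟨_, mem_image_of_mem _ (zero_mem_kantorovichAdmissible U)⟩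
  exact ⟨u, hu, hmax⟩
end

section
/- Let n ≥ 1 be an integer, p > 2 a real number, R₁ > 0, and f⁺ : [0,R₁] → ℝ continuous. Set C₁ := −(1/R₁ⁿ)∫_0^{R₁} f⁺(ρ)ρ^{n−1} dρ, F̄(r) := C₁·R₁ⁿ/rⁿ + (1/rⁿ)∫_r^{R₁} f⁺(ρ)ρ^{n−1} dρ for r ∈ (0,R₁], and define ū(x) := ∫_{R₁}^{|x|} sgn(F̄(ρ))·|F̄(ρ)ρ|^{1/(p−1)} dρ for 0 < |x| ≤ R₁. Then: (i) ū(x) = 0 whenever |x| = R₁; (ii) ū is differentiable at every x with 0 < |x| < R₁, with gradient ∇ū(x) = sgn(F̄(|x|))·|F̄(|x|)·|x||^{1/(p−1)} · x/|x|; (iii) |∇ū(x)|^{p−2}∇ū(x) = F̄(|x|)·x at every such x; (iv) consequently the vector field x ↦ |∇ū(x)|^{p−2}∇ū(x) is differentiable on the punctured ball {0 < |x| < R₁} with divergence equal to −f⁺(|x|), i.e. ū is a radially symmetric classical solution of the p-Laplacian equation div(|∇u|^{p−2}∇u) + f⁺ = 0 there. -/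
open Real MeasureTheory intervalIntegral Set

lemma sign_mul_pos_right (a : ℝ) {c : ℝ} (hc : 0 < c) : Real.sign (a * c) = Real.sign a := by
  rcases lt_trichotomy a 0 with h|h|h
  · rw [Real.sign_of_neg h, Real.sign_of_neg (mul_neg_of_neg_of_pos h hc)]
  · simp [h]
  · rw [Real.sign_of_pos h, Real.sign_of_pos (mul_pos h hc)]

lemma abs_sign_le (s : ℝ) : |Real.sign s| ≤ 1 := by
  rcases lt_trichotomy s 0 with h|h|h
  · rw [Real.sign_of_neg h]; norm_num
  · simp [h]
  · rw [Real.sign_of_pos h]; norm_num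

lemma abs_sign_eq_one {s : ℝ} (hs : s ≠ 0) : |Real.sign s| = 1 := by
  rcases lt_trichotomy s 0 with h|h|h
  · rw [Real.sign_of_neg h]; norm_num
  · exact absurd h hs
  · rw [Real.sign_of_pos h]; norm_num

lemma sign_mul_abs' (s : ℝ) : Real.sign s * |s| = s := by
  rcases lt_trichotomy s 0 with h|h|h
  · rw [Real.sign_of_neg h, abs_of_neg h]; ring
  · simp [h]
  · rw [Real.sign_of_pos h, abs_of_pos h]; ring

lemma continuous_signPow {α : ℝ} (hα : 0 < α) :
    Continuous (fun t : ℝ => Real.sign t * |t| ^ α) := by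
  rw [continuous_iff_continuousAt]
  intro t
  have habs : Continuous (fun s : ℝ => |s| ^ α) :=
    continuous_abs.rpow_const fun _ => Or.inr hα.le
  rcases lt_trichotomy t 0 with h|h|h
  · have hev : (fun s : ℝ => Real.sign s * |s| ^ α) =ᶠ[nhds t] fun s => -1 * |s| ^ α := by
      filter_upwards [eventually_lt_nhds h] with s hs
      rw [Real.sign_of_neg hs]
    exact ContinuousAt.congr ((habs.continuousAt).const_mul (-1)) hev.symm
  · subst h
    have h0 : Real.sign (0:ℝ) * |(0:ℝ)| ^ α = 0 := by
      simp [Real.zero_rpow hα.ne']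
    unfold ContinuousAt
    simp only [h0]
    refine squeeze_zero_norm (a := fun s : ℝ => |s| ^ α) (fun s => ?_) ?_
    · rw [Real.norm_eq_abs, abs_mul, abs_of_nonneg (Real.rpow_nonneg (abs_nonneg s) α)]
      calc |Real.sign s| * |s| ^ α ≤ 1 * |s| ^ α :=
            mul_le_mul_of_nonneg_right (abs_sign_le s) (Real.rpow_nonneg (abs_nonneg s) α)
        _ = |s| ^ α := one_mul _
    · have := habs.continuousAt (x := (0:ℝ))
      unfold ContinuousAt at this
      simpa [Real.zero_rpow hα.ne'] using this
  · have hev : (fun s : ℝ => Real.sign s * |s| ^ α) =ᶠ[nhds t] fun s => 1 * |s| ^ α := by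
      filter_upwards [eventually_gt_nhds h] with s hs
      rw [Real.sign_of_pos hs]
    exact ContinuousAt.congr ((habs.continuousAt).const_mul 1) hev.symm

lemma trace_smulRight_euclidean {n : ℕ} (L : EuclideanSpace ℝ (Fin n) →L[ℝ] ℝ)
    (b : EuclideanSpace ℝ (Fin n)) :
    LinearMap.trace ℝ (EuclideanSpace ℝ (Fin n)) (L.smulRight b).toLinearMap = L b := by
  classical
  rw [LinearMap.trace_eq_matrix_trace ℝ ((EuclideanSpace.basisFun (Fin n) ℝ).toBasis)]
  rw [Matrix.trace]
  have hdiag : ∀ i, (LinearMap.toMatrix ((EuclideanSpace.basisFun (Fin n) ℝ).toBasis)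
      ((EuclideanSpace.basisFun (Fin n) ℝ).toBasis) (L.smulRight b).toLinearMap) i i
      = b i * L (EuclideanSpace.basisFun (Fin n) ℝ i) := by
    intro i
    rw [LinearMap.toMatrix_apply]
    simp [mul_comm]
  calc ∑ i, Matrix.diag _ i = ∑ i, b i * L (EuclideanSpace.basisFun (Fin n) ℝ i) := by
        refine Finset.sum_congr rfl fun i _ => ?_
        simpa [Matrix.diag] using hdiag i
    _ = L (∑ i, b i • EuclideanSpace.basisFun (Fin n) ℝ i) := by
        rw [map_sum]; simp [smul_eq_mul, mul_comm]
    _ = L b := by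
        congr 1
        have := ((EuclideanSpace.basisFun (Fin n) ℝ).toBasis).sum_repr b
        simpa using this

lemma hasFDerivAt_norm_euclid {E : Type*} [NormedAddCommGroup E] [InnerProductSpace ℝ E]
    {x : E} (hx : x ≠ 0) :
    HasFDerivAt (fun y : E => ‖y‖) (‖x‖⁻¹ • innerSL ℝ x) x := by
  have hx' : ‖x‖ ≠ 0 := norm_ne_zero_iff.2 hx
  have h1 : HasFDerivAt (fun y : E => ‖y‖ ^ 2) (2 • innerSL ℝ x) x :=
    (hasStrictFDerivAt_norm_sq x).hasFDerivAt
  have h2 := h1.sqrt (by positivity)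
  have heq : (fun y : E => Real.sqrt (‖y‖ ^ 2)) = fun y : E => ‖y‖ :=
    funext fun y => Real.sqrt_sq (norm_nonneg y)
  rw [heq] at h2
  convert h2 using 1
  have hs : Real.sqrt (‖x‖ ^ 2) = ‖x‖ := Real.sqrt_sq (norm_nonneg x)
  ext y
  simp only [ContinuousLinearMap.coe_smul', Pi.smul_apply, smul_eq_mul, hs,
    ContinuousLinearMap.smul_apply, two_smul, ContinuousLinearMap.add_apply]
  field_simp
  ring

/-- Explicit radially symmetric solution of the p-Laplacian equation
`div(|∇u|^{p-2}∇u) + f⁺ = 0` on the punctured ball `{0 < |x| < R₁}` (Theorem 1.1,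
disjoint-balls case, source ball). -/
theorem pLaplacian_explicit_solution_ball (n : ℕ) (hn : 1 ≤ n) (p : ℝ) (hp : 2 < p)
    (R₁ : ℝ) (hR₁ : 0 < R₁)
    (f : ℝ → ℝ) (hf : ContinuousOn f (Set.Icc 0 R₁))
    (C₁ : ℝ) (hC₁ : C₁ = -(1 / R₁ ^ n) * ∫ ρ in (0:ℝ)..R₁, f ρ * ρ ^ (n - 1))
    (Fbar : ℝ → ℝ)
    (hFbar : ∀ r, Fbar r = C₁ * R₁ ^ n / r ^ n +
      (1 / r ^ n) * ∫ ρ in r..R₁, f ρ * ρ ^ (n - 1))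
    (u : EuclideanSpace ℝ (Fin n) → ℝ)
    (hu : ∀ x, u x = ∫ ρ in R₁..‖x‖,
      Real.sign (Fbar ρ) * |Fbar ρ * ρ| ^ (1 / (p - 1))) :
    -- (i) boundary condition
    (∀ x : EuclideanSpace ℝ (Fin n), ‖x‖ = R₁ → u x = 0) ∧
    -- (ii) differentiability and gradient formula
    (∀ x : EuclideanSpace ℝ (Fin n), 0 < ‖x‖ → ‖x‖ < R₁ →
      DifferentiableAt ℝ u x ∧
      gradient u x =
        (Real.sign (Fbar ‖x‖) * |Fbar ‖x‖ * ‖x‖| ^ (1 / (p - 1)) / ‖x‖) • x) ∧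
    -- (iii) flux identity
    (∀ x : EuclideanSpace ℝ (Fin n), 0 < ‖x‖ → ‖x‖ < R₁ →
      ‖gradient u x‖ ^ (p - 2) • gradient u x = Fbar ‖x‖ • x) ∧
    -- (iv) the flux field is differentiable with divergence `-f⁺(|x|)`
    (∀ x : EuclideanSpace ℝ (Fin n), 0 < ‖x‖ → ‖x‖ < R₁ →
      DifferentiableAt ℝ
        (fun y : EuclideanSpace ℝ (Fin n) => ‖gradient u y‖ ^ (p - 2) • gradient u y) x ∧
      LinearMap.trace ℝ (EuclideanSpace ℝ (Fin n))
        (fderiv ℝ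
          (fun y : EuclideanSpace ℝ (Fin n) => ‖gradient u y‖ ^ (p - 2) • gradient u y)
          x).toLinearMap = -(f ‖x‖)) := by
  have hp1 : (0:ℝ) < p - 1 := by linarith
  set α : ℝ := 1 / (p - 1) with hα_def
  have hα : 0 < α := by positivity
  set h : ℝ → ℝ := fun ρ => Real.sign (Fbar ρ) * |Fbar ρ * ρ| ^ α with hh_def
  set gI : ℝ → ℝ := fun ρ => f ρ * ρ ^ (n - 1) with hgI_def
  have hgc : ContinuousOn gI (Icc 0 R₁) :=
    hf.mul (continuous_pow (n - 1)).continuousOn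
  set I : ℝ → ℝ := fun t => ∫ ρ in t..R₁, gI ρ with hI_def
  have hIcont : ContinuousOn I (Icc 0 R₁) := by
    have hint : IntegrableOn gI (uIcc 0 R₁) := by
      rw [uIcc_of_le hR₁.le]
      exact hgc.integrableOn_Icc
    have := continuousOn_primitive_interval_left hint
    rwa [uIcc_of_le hR₁.le] at this
  have hFbeq : Fbar = fun t => (C₁ * R₁ ^ n + I t) / t ^ n := by
    funext t
    rw [hFbar t]
    simp only [hI_def]
    ring
  have hFbar_cont : ContinuousOn Fbar (Ioc 0 R₁) := by
    rw [hFbeq]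
    exact (continuousOn_const.add (hIcont.mono Ioc_subset_Icc_self)).div
      (continuous_pow n).continuousOn
      (fun t ht => pow_ne_zero n (ne_of_gt ht.1))
  have hh_cont : ContinuousOn h (Ioc 0 R₁) := by
    have c1 : ContinuousOn (fun ρ => Real.sign (Fbar ρ * ρ) * |Fbar ρ * ρ| ^ α) (Ioc 0 R₁) :=
      (continuous_signPow hα).comp_continuousOn (hFbar_cont.mul continuousOn_id)
    exact c1.congr fun ρ hρ => by
      rw [hh_def]
      simp only [sign_mul_pos_right (Fbar ρ) hρ.1]
  -- part (i)
  have hi : ∀ x : EuclideanSpace ℝ (Fin n), ‖x‖ = R₁ → u x = 0 := by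
    intro x hx
    rw [hu x, hx, intervalIntegral.integral_same]
  -- gradient at interior points
  have hgrad : ∀ x : EuclideanSpace ℝ (Fin n), 0 < ‖x‖ → ‖x‖ < R₁ →
      HasGradientAt u ((h ‖x‖ / ‖x‖) • x) x := by
    intro x hr0 hrR
    have hx0 : x ≠ 0 := by
      intro hx; rw [hx] at hr0; simp at hr0
    have hmem : ‖x‖ ∈ Ioo (0:ℝ) R₁ := ⟨hr0, hrR⟩
    have hsub : uIcc R₁ ‖x‖ ⊆ Ioc 0 R₁ := by
      rw [uIcc_of_ge hrR.le]
      exact fun t ht => ⟨lt_of_lt_of_le hr0 ht.1, ht.2⟩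
    have hint : IntervalIntegrable h volume R₁ ‖x‖ :=
      (hh_cont.mono hsub).intervalIntegrable
    have hmeas : StronglyMeasurableAtFilter h (nhds ‖x‖) volume :=
      ContinuousOn.stronglyMeasurableAtFilter isOpen_Ioo
        (hh_cont.mono Ioo_subset_Ioc_self) ‖x‖ hmem
    have hcontAt : ContinuousAt h ‖x‖ :=
      (hh_cont.mono Ioo_subset_Ioc_self).continuousAt (Ioo_mem_nhds hr0 hrR)
    have hhr : HasDerivAt (fun t => ∫ ρ in R₁..t, h ρ) (h ‖x‖) ‖x‖ :=
      integral_hasDerivAt_right hint hmeas hcontAt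
    have hnorm : HasFDerivAt (fun y : EuclideanSpace ℝ (Fin n) => ‖y‖)
        (‖x‖⁻¹ • innerSL ℝ x) x := hasFDerivAt_norm_euclid hx0
    have hufd : HasFDerivAt u (h ‖x‖ • (‖x‖⁻¹ • innerSL ℝ x)) x := by
      have hcomp := hhr.comp_hasFDerivAt x hnorm
      have hue : u = (fun t => ∫ ρ in R₁..t, h ρ) ∘ (fun y : EuclideanSpace ℝ (Fin n) => ‖y‖) :=
        funext fun y => hu y
      rw [hue]
      exact hcomp
    rw [hasGradientAt_iff_hasFDerivAt]
    refine hufd.congr_fderiv ?_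
    ext y
    simp only [InnerProductSpace.toDual_apply_apply, ContinuousLinearMap.coe_smul', Pi.smul_apply,
      smul_eq_mul, innerSL_apply_apply, real_inner_smul_left]
    ring
  have hii : ∀ x : EuclideanSpace ℝ (Fin n), 0 < ‖x‖ → ‖x‖ < R₁ →
      DifferentiableAt ℝ u x ∧
      gradient u x = (Real.sign (Fbar ‖x‖) * |Fbar ‖x‖ * ‖x‖| ^ α / ‖x‖) • x := by
    intro x hr0 hrR
    exact ⟨(hgrad x hr0 hrR).differentiableAt, (hgrad x hr0 hrR).gradient⟩
  -- scalar identity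
  have hkey : ∀ r : ℝ, 0 < r → |h r| ^ (p - 2) * h r = Fbar r * r := by
    intro r hr0
    have hr_eq : h r = Real.sign (Fbar r * r) * |Fbar r * r| ^ α := by
      rw [hh_def]
      simp only [sign_mul_pos_right (Fbar r) hr0]
    rcases eq_or_ne (Fbar r * r) 0 with ht | ht
    · rw [hr_eq, ht]
      simp [Real.sign_zero]
    · have habs : |h r| = |Fbar r * r| ^ α := by
        rw [hr_eq, abs_mul, abs_of_nonneg (Real.rpow_nonneg (abs_nonneg _) α),
          abs_sign_eq_one ht, one_mul]
      have htpos : (0:ℝ) < |Fbar r * r| := abs_pos.2 ht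
      have hexp : α * (p - 2) + α = 1 := by
        rw [hα_def]
        field_simp
        ring
      rw [habs, hr_eq, ← Real.rpow_mul (abs_nonneg _)]
      calc |Fbar r * r| ^ (α * (p - 2)) * (Real.sign (Fbar r * r) * |Fbar r * r| ^ α)
          = Real.sign (Fbar r * r) * (|Fbar r * r| ^ (α * (p - 2)) * |Fbar r * r| ^ α) := by
            ring
        _ = Real.sign (Fbar r * r) * |Fbar r * r| := by
            rw [← Real.rpow_add htpos, hexp, Real.rpow_one]
        _ = Fbar r * r := sign_mul_abs' _
  -- part (iii)
  have hiii : ∀ x : EuclideanSpace ℝ (Fin n), 0 < ‖x‖ → ‖x‖ < R₁ →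
      ‖gradient u x‖ ^ (p - 2) • gradient u x = Fbar ‖x‖ • x := by
    intro x hr0 hrR
    have hg := (hgrad x hr0 hrR).gradient
    rw [hg]
    have hnormg : ‖(h ‖x‖ / ‖x‖) • x‖ = |h ‖x‖| := by
      rw [norm_smul, Real.norm_eq_abs, abs_div, abs_of_pos hr0,
        div_mul_cancel₀ _ hr0.ne']
    rw [hnormg, smul_smul]
    congr 1
    rw [← mul_div_assoc, hkey ‖x‖ hr0, mul_div_cancel_right₀ _ hr0.ne']
  -- part (iv)
  have hiv : ∀ x : EuclideanSpace ℝ (Fin n), 0 < ‖x‖ → ‖x‖ < R₁ →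
      DifferentiableAt ℝ
        (fun y : EuclideanSpace ℝ (Fin n) => ‖gradient u y‖ ^ (p - 2) • gradient u y) x ∧
      LinearMap.trace ℝ (EuclideanSpace ℝ (Fin n))
        (fderiv ℝ
          (fun y : EuclideanSpace ℝ (Fin n) => ‖gradient u y‖ ^ (p - 2) • gradient u y)
          x).toLinearMap = -(f ‖x‖) := by
    intro x hr0 hrR
    have hx0 : x ≠ 0 := by
      intro hx; rw [hx] at hr0; simp at hr0
    have hmem : ‖x‖ ∈ Ioo (0:ℝ) R₁ := ⟨hr0, hrR⟩
    have hnorm : HasFDerivAt (fun y : EuclideanSpace ℝ (Fin n) => ‖y‖)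
        (‖x‖⁻¹ • innerSL ℝ x) x := hasFDerivAt_norm_euclid hx0
    -- derivative of Fbar
    have hsub : uIcc ‖x‖ R₁ ⊆ Icc 0 R₁ := by
      rw [uIcc_of_le hrR.le]
      exact fun t ht => ⟨le_of_lt (lt_of_lt_of_le hr0 ht.1), ht.2⟩
    have hintg : IntervalIntegrable gI volume ‖x‖ R₁ :=
      (hgc.mono hsub).intervalIntegrable
    have hmeasg : StronglyMeasurableAtFilter gI (nhds ‖x‖) volume :=
      ContinuousOn.stronglyMeasurableAtFilter isOpen_Ioo
        (hgc.mono Ioo_subset_Icc_self) ‖x‖ hmem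
    have hgcont : ContinuousAt gI ‖x‖ :=
      (hgc.mono Ioo_subset_Icc_self).continuousAt (Ioo_mem_nhds hr0 hrR)
    have hI' : HasDerivAt I (-(gI ‖x‖)) ‖x‖ :=
      integral_hasDerivAt_left hintg hmeasg hgcont
    have hden : HasDerivAt (fun t : ℝ => t ^ n) ((n:ℝ) * ‖x‖ ^ (n - 1)) ‖x‖ :=
      hasDerivAt_pow n ‖x‖
    have hnum : HasDerivAt (fun t => C₁ * R₁ ^ n + I t) (-(gI ‖x‖)) ‖x‖ :=
      hI'.const_add _
    have hq : HasDerivAt (fun t => (C₁ * R₁ ^ n + I t) / t ^ n)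
        (((-(gI ‖x‖)) * ‖x‖ ^ n - (C₁ * R₁ ^ n + I ‖x‖) * ((n:ℝ) * ‖x‖ ^ (n - 1))) /
          (‖x‖ ^ n) ^ 2) ‖x‖ :=
      hnum.div hden (pow_ne_zero n hr0.ne')
    have hFb' : HasDerivAt Fbar ((-((n:ℝ) * Fbar ‖x‖) - f ‖x‖) / ‖x‖) ‖x‖ := by
      rw [hFbeq]
      convert hq using 1
      obtain ⟨m, rfl⟩ : ∃ m, n = m + 1 := ⟨n - 1, (Nat.succ_pred_eq_of_pos hn).symm⟩
      simp only [hgI_def, Nat.add_sub_cancel]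
      have hxne : ‖x‖ ≠ 0 := hr0.ne'
      field_simp
      ring
    have hscal : HasFDerivAt (fun y : EuclideanSpace ℝ (Fin n) => Fbar ‖y‖)
        (((-((n:ℝ) * Fbar ‖x‖) - f ‖x‖) / ‖x‖) • (‖x‖⁻¹ • innerSL ℝ x)) x :=
      hFb'.comp_hasFDerivAt x hnorm
    have hGfd : HasFDerivAt (fun y : EuclideanSpace ℝ (Fin n) => Fbar ‖y‖ • y)
        (Fbar ‖x‖ • ContinuousLinearMap.id ℝ (EuclideanSpace ℝ (Fin n)) +
          ((((-((n:ℝ) * Fbar ‖x‖) - f ‖x‖) / ‖x‖) • (‖x‖⁻¹ • innerSL ℝ x)).smulRight x)) x :=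
      hscal.smul (hasFDerivAt_id x)
    have hxS : x ∈ Metric.ball (0 : EuclideanSpace ℝ (Fin n)) R₁ \ {0} :=
      ⟨mem_ball_zero_iff.2 hrR, by simpa using hx0⟩
    have hSopen : IsOpen (Metric.ball (0 : EuclideanSpace ℝ (Fin n)) R₁ \ {0}) :=
      Metric.isOpen_ball.sdiff isClosed_singleton
    have heqv : (fun y : EuclideanSpace ℝ (Fin n) => ‖gradient u y‖ ^ (p - 2) • gradient u y)
        =ᶠ[nhds x] fun y : EuclideanSpace ℝ (Fin n) => Fbar ‖y‖ • y := by
      filter_upwards [hSopen.mem_nhds hxS] with y hy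
      have hy0 : y ≠ 0 := by simpa using hy.2
      exact hiii y (norm_pos_iff.2 hy0) (mem_ball_zero_iff.1 hy.1)
    refine ⟨hGfd.differentiableAt.congr_of_eventuallyEq heqv, ?_⟩
    rw [heqv.fderiv_eq, hGfd.fderiv]
    rw [ContinuousLinearMap.coe_add, map_add, ContinuousLinearMap.coe_smul,
      LinearMap.map_smul, ContinuousLinearMap.coe_id, LinearMap.trace_id,
      trace_smulRight_euclidean]
    simp only [finrank_euclideanSpace_fin, ContinuousLinearMap.coe_smul',
      Pi.smul_apply, smul_eq_mul, innerSL_apply_apply, real_inner_self_eq_norm_mul_norm]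
    have hxne : ‖x‖ ≠ 0 := hr0.ne'
    field_simp
    ring
  exact ⟨hi, hii, hiii, hiv⟩
end

section
/- Let n ≥ 1 be an integer, p > 2 a real number, R₂ > 0, and f⁻ : [0,R₂] → ℝ continuous. Set D₁ := (1/R₂ⁿ)∫_0^{R₂} f⁻(ρ)ρ^{n−1} dρ, Ḡ(r) := D₁·R₂ⁿ/rⁿ − (1/rⁿ)∫_r^{R₂} f⁻(ρ)ρ^{n−1} dρ for r ∈ (0,R₂], and define ū(x) := ∫_{R₂}^{|x|} sgn(Ḡ(ρ))·|Ḡ(ρ)ρ|^{1/(p−1)} dρ for 0 < |x| ≤ R₂. Then: (i) Ḡ(r) = (1/rⁿ)∫_0^r f⁻(ρ)ρ^{n−1} dρ for all r ∈ (0,R₂] and Ḡ is differentiable on (0,R₂] with Ḡ'(r) + n·Ḡ(r)/r = f⁻(r)/r; (ii) ū(x) = 0 whenever |x| = R₂; (iii) ū is differentiable at every x with 0 < |x| < R₂, with |∇ū(x)|^{p−2}∇ū(x) = Ḡ(|x|)·x, and the divergence of x ↦ |∇ū(x)|^{p−2}∇ū(x) equals f⁻(|x|), i.e. ū is a radially symmetric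 classical solution of div(|∇u|^{p−2}∇u) − f⁻ = 0 on the punctured ball {0 < |x| < R₂}. -/
/-!
On `(0, R₂]` the profile is `Ḡ(r) = r⁻ⁿ ∫₀ʳ f ρ ρⁿ⁻¹ dρ`, so `(rⁿ Ḡ)' = f rⁿ⁻¹`, i.e.
`r Ḡ' + n Ḡ = f`. The function `u` is radial with profile derivative `φ(Ḡ(r) r)`, where
`φ(a) = sgn a · |a|^{1/(p-1)}` inverts `v ↦ |v|^{p-2} v`; hence `|∇u|^{p-2} ∇u = Ḡ(|x|) x`.
The divergence of a radial field `G(|x|) x` is `n G + r G'`, which equals `f` by the ODE.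
-/

open Set Topology intervalIntegral

namespace Real

lemma sign_mul_abs (r : ℝ) : sign r * |r| = r := by
  rcases lt_trichotomy r 0 with hr | rfl | hr
  · rw [sign_of_neg hr, abs_of_neg hr, neg_one_mul, neg_neg]
  · simp
  · rw [sign_of_pos hr, abs_of_pos hr, one_mul]

lemma abs_sign_of_ne_zero {r : ℝ} (hr : r ≠ 0) : |sign r| = 1 := by
  rcases sign_apply_eq_of_ne_zero r hr with h | h <;> simp [h]

lemma sign_mul_of_pos (r : ℝ) {s : ℝ} (hs : 0 < s) : sign (r * s) = sign r := by
  rcases lt_trichotomy r 0 with hr | rfl | hr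
  · rw [sign_of_neg hr, sign_of_neg (mul_neg_of_neg_of_pos hr hs)]
  · simp
  · rw [sign_of_pos hr, sign_of_pos (mul_pos hr hs)]

end Real

noncomputable def signedRpow (α a : ℝ) : ℝ := Real.sign a * |a| ^ α

lemma signedRpow_mul_of_pos (α a : ℝ) {b : ℝ} (hb : 0 < b) :
    signedRpow α (a * b) = Real.sign a * |a * b| ^ α := by
  rw [signedRpow, Real.sign_mul_of_pos a hb]

lemma signedRpow_eq_max_sub_max {α : ℝ} (hα : 0 < α) (a : ℝ) :
    signedRpow α a = max a 0 ^ α - max (-a) 0 ^ α := by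
  rcases lt_trichotomy a 0 with ha | rfl | ha
  · simp [signedRpow, Real.sign_of_neg ha, abs_of_neg ha, ha.le, Real.zero_rpow hα.ne']
  · simp [signedRpow, Real.zero_rpow hα.ne']
  · simp [signedRpow, Real.sign_of_pos ha, abs_of_pos ha, ha.le, Real.zero_rpow hα.ne']

lemma continuous_signedRpow {α : ℝ} (hα : 0 < α) : Continuous (signedRpow α) := by
  rw [funext (signedRpow_eq_max_sub_max hα)]
  exact ((continuous_id.max continuous_const).rpow_const fun _ => .inr hα.le).sub
    ((continuous_neg.max continuous_const).rpow_const fun _ => .inr hα.le)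

lemma abs_rpow_mul_signedRpow {α β : ℝ} (hαβ : α * (β + 1) = 1) (a : ℝ) :
    |signedRpow α a| ^ β * signedRpow α a = a := by
  rcases eq_or_ne a 0 with rfl | ha
  · simp [signedRpow]
  have habs : |signedRpow α a| = |a| ^ α := by
    rw [signedRpow, abs_mul, Real.abs_sign_of_ne_zero ha, one_mul,
      abs_of_nonneg (Real.rpow_nonneg (abs_nonneg a) α)]
  calc |signedRpow α a| ^ β * signedRpow α a
      = Real.sign a * (|a| ^ (α * β) * |a| ^ α) := by
        rw [habs, ← Real.rpow_mul (abs_nonneg a), signedRpow]; ring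
    _ = a := by
        rw [← Real.rpow_add (abs_pos.mpr ha), ← mul_add_one, hαβ, Real.rpow_one,
          Real.sign_mul_abs]

lemma hasDerivWithinAt_integral_Icc {E : Type*} [NormedAddCommGroup E] [NormedSpace ℝ E]
    [CompleteSpace E] {h : ℝ → E} {a b c t : ℝ} (hh : ContinuousOn h (Icc a b))
    (hc : c ∈ Icc a b) (ht : t ∈ Icc a b) :
    HasDerivWithinAt (fun u => ∫ x in c..u, h x) (h t) (Icc a b) t := by
  -- the `FTCFilter` instance for `𝓝[Icc a b] t` is found through this `Fact`
  have : Fact (t ∈ Icc a b) := ⟨ht⟩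
  exact integral_hasDerivWithinAt_right (hh.mono (uIcc_subset_Icc hc ht)).intervalIntegrable
    (hh.stronglyMeasurableAtFilter_nhdsWithin measurableSet_Icc t) (hh t ht)

lemma HasDerivWithinAt.one_div_pow_mul {H : ℝ → ℝ} {c r : ℝ} {s : Set ℝ} {n : ℕ}
    (hH : HasDerivWithinAt H (c * r ^ (n - 1)) s r) (hr : 0 < r) (hn : 1 ≤ n) :
    HasDerivWithinAt (fun r => 1 / r ^ n * H r) (c / r - n * (1 / r ^ n * H r) / r) s r := by
  obtain ⟨m, rfl⟩ : ∃ m, n = m + 1 := ⟨n - 1, by omega⟩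
  have hpow := (hasDerivAt_const r (1 : ℝ)).div (hasDerivAt_pow (m + 1) r) (by positivity)
  refine (hpow.hasDerivWithinAt.mul hH).congr_deriv ?_
  simp only [Nat.add_sub_cancel, Pi.div_apply]
  field_simp
  ring

lemma hasDerivWithinAt_one_div_pow_mul_integral {f : ℝ → ℝ} {R r : ℝ} {n : ℕ} (hn : 1 ≤ n)
    (hf : ContinuousOn f (Icc 0 R)) (hr : r ∈ Ioc 0 R) :
    HasDerivWithinAt (fun r => 1 / r ^ n * ∫ ρ in (0:ℝ)..r, f ρ * ρ ^ (n - 1))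
      (f r / r - n * (1 / r ^ n * ∫ ρ in (0:ℝ)..r, f ρ * ρ ^ (n - 1)) / r) (Ioc 0 R) r :=
  ((hasDerivWithinAt_integral_Icc (hf.mul (continuous_pow _).continuousOn)
    ⟨le_rfl, hr.1.le.trans hr.2⟩ (Ioc_subset_Icc_self hr)).mono Ioc_subset_Icc_self).one_div_pow_mul
    hr.1 hn

section Radial

variable {E : Type*} [NormedAddCommGroup E] [InnerProductSpace ℝ E]

lemma hasFDerivAt_norm_of_ne_zero {x : E} (hx : x ≠ 0) :
    HasFDerivAt (‖·‖) (‖x‖⁻¹ • innerSL ℝ x) x := by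
  have hsq := (hasStrictFDerivAt_norm_sq x).hasFDerivAt.sqrt (by positivity)
  simp only [Real.sqrt_sq (norm_nonneg _)] at hsq
  convert hsq using 1
  ext v
  simp only [smul_apply, coe_innerSL_apply, smul_eq_mul, one_div, mul_inv_rev,
    nsmul_eq_mul, Nat.cast_ofNat]
  ring

lemma HasDerivAt.hasGradientAt_comp_norm [CompleteSpace E] {w : ℝ → ℝ} {w' : ℝ} {x : E}
    (hw : HasDerivAt w w' ‖x‖) (hx : x ≠ 0) :
    HasGradientAt (fun y => w ‖y‖) ((w' / ‖x‖) • x) x := by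
  rw [hasGradientAt_iff_hasFDerivAt]
  refine (hw.comp_hasFDerivAt x (hasFDerivAt_norm_of_ne_zero hx)).congr_fderiv ?_
  ext v
  simp only [smul_apply, coe_innerSL_apply, smul_eq_mul, div_eq_inv_mul,
    map_smul, InnerProductSpace.toDual_apply_apply]
  ring

lemma hasGradientAt_integral_norm [CompleteSpace E] {g : ℝ → ℝ} {R : ℝ}
    (hg : ContinuousOn g (Ioc 0 R)) {y : E} (hy₀ : 0 < ‖y‖) (hyR : ‖y‖ < R) :
    HasGradientAt (fun x => ∫ ρ in R..‖x‖, g ρ) ((g ‖y‖ / ‖y‖) • y) y := by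
  have hsub : Icc (‖y‖ / 2) R ⊆ Ioc 0 R := fun ρ hρ => ⟨by linarith [hρ.1], hρ.2⟩
  have hw := hasDerivWithinAt_integral_Icc (hg.mono hsub) ⟨by linarith, le_rfl⟩
    ⟨by linarith, hyR.le⟩
  exact (hw.hasDerivAt (Icc_mem_nhds (by linarith) hyR)).hasGradientAt_comp_norm
    (norm_pos_iff.mp hy₀)

lemma hasGradientAt_integral_norm_sign_mul_abs_rpow [CompleteSpace E] {G : ℝ → ℝ} {R α : ℝ}
    (hα : 0 < α) (hG : ContinuousOn G (Ioc 0 R)) {y : E} (hy₀ : 0 < ‖y‖) (hyR : ‖y‖ < R) :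
    HasGradientAt (fun x => ∫ ρ in R..‖x‖, Real.sign (G ρ) * |G ρ * ρ| ^ α)
      ((signedRpow α (G ‖y‖ * ‖y‖) / ‖y‖) • y) y := by
  have hg : ContinuousOn (fun ρ => Real.sign (G ρ) * |G ρ * ρ| ^ α) (Ioc 0 R) :=
    ((continuous_signedRpow hα).comp_continuousOn (hG.mul continuousOn_id)).congr
      fun ρ hρ => (signedRpow_mul_of_pos _ _ hρ.1).symm
  rw [signedRpow_mul_of_pos _ _ hy₀]
  exact hasGradientAt_integral_norm hg hy₀ hyR

lemma HasDerivAt.hasFDerivAt_smul_self_comp_norm {G : ℝ → ℝ} {G' : ℝ} {x : E}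
    (hG : HasDerivAt G G' ‖x‖) (hx : x ≠ 0) :
    HasFDerivAt (fun y => G ‖y‖ • y)
      (G ‖x‖ • ContinuousLinearMap.id ℝ E + ((G' / ‖x‖) • innerSL ℝ x).smulRight x) x := by
  refine ((hG.comp_hasFDerivAt x (hasFDerivAt_norm_of_ne_zero hx)).smul
    (hasFDerivAt_id x)).congr_fderiv ?_
  rw [smul_smul, div_eq_mul_inv]
  rfl

lemma HasDerivAt.trace_fderiv_smul_self_comp_norm [FiniteDimensional ℝ E] {G : ℝ → ℝ}
    {G' : ℝ} {x : E} (hG : HasDerivAt G G' ‖x‖) (hx : x ≠ 0) :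
    LinearMap.trace ℝ E (fderiv ℝ (fun y => G ‖y‖ • y) x).toLinearMap
      = Module.finrank ℝ E * G ‖x‖ + ‖x‖ * G' := by
  rw [(hG.hasFDerivAt_smul_self_comp_norm hx).fderiv]
  have hx' : ‖x‖ ≠ 0 := norm_ne_zero_iff.mpr hx
  simp only [ContinuousLinearMap.toLinearMap_add, ContinuousLinearMap.toLinearMap_smul,
    ContinuousLinearMap.coe_id, ContinuousLinearMap.coe_smulRight,
    ContinuousLinearMap.toLinearMap_innerSL_apply, map_add, map_smul, LinearMap.trace_id,
    smul_eq_mul, LinearMap.trace_smulRight, LinearMap.smul_apply, innerₛₗ_apply_apply,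
    inner_self_eq_norm_sq_to_K, Real.ringHom_apply]
  field_simp

lemma norm_rpow_smul_signedRpow_div_norm_smul {p : ℝ} (hp : p ≠ 1) (c : ℝ) {y : E}
    (hy : y ≠ 0) :
    ‖(signedRpow (1 / (p - 1)) (c * ‖y‖) / ‖y‖) • y‖ ^ (p - 2)
      • (signedRpow (1 / (p - 1)) (c * ‖y‖) / ‖y‖) • y = c • y := by
  have hy' : 0 < ‖y‖ := norm_pos_iff.mpr hy
  have hexp : 1 / (p - 1) * (p - 2 + 1) = 1 := by
    field_simp [sub_ne_zero.mpr hp]; ring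
  rw [smul_smul, norm_smul, Real.norm_eq_abs, abs_div, abs_of_pos hy', div_mul_cancel₀ _ hy'.ne',
    ← mul_div_assoc, abs_rpow_mul_signedRpow hexp, mul_div_cancel_right₀ _ hy'.ne']

end Radial

theorem pLaplacian_explicit_solution_target_ball_general (n : ℕ) (hn : 1 ≤ n) (p : ℝ) (hp : 2 < p)
    (R₂ : ℝ)
    (f : ℝ → ℝ) (hf : ContinuousOn f (Set.Icc 0 R₂))
    (D₁ : ℝ) (hD₁ : D₁ = (1 / R₂ ^ n) * ∫ ρ in (0:ℝ)..R₂, f ρ * ρ ^ (n - 1))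
    (Gbar : ℝ → ℝ)
    (hGbar : ∀ r, Gbar r = D₁ * R₂ ^ n / r ^ n -
      (1 / r ^ n) * ∫ ρ in r..R₂, f ρ * ρ ^ (n - 1))
    (u : EuclideanSpace ℝ (Fin n) → ℝ)
    (hu : ∀ x, u x = ∫ ρ in R₂..‖x‖,
      Real.sign (Gbar ρ) * |Gbar ρ * ρ| ^ (1 / (p - 1))) :
    -- (i) alternative formula and ODE for `Ḡ`
    ((∀ r ∈ Set.Ioc (0:ℝ) R₂,
        Gbar r = (1 / r ^ n) * ∫ ρ in (0:ℝ)..r, f ρ * ρ ^ (n - 1)) ∧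
      ∀ r ∈ Set.Ioc (0:ℝ) R₂,
        HasDerivWithinAt Gbar (f r / r - n * Gbar r / r) (Set.Ioc (0:ℝ) R₂) r) ∧
    -- (ii) boundary condition
    (∀ x : EuclideanSpace ℝ (Fin n), ‖x‖ = R₂ → u x = 0) ∧
    -- (iii) differentiability, flux identity and divergence
    (∀ x : EuclideanSpace ℝ (Fin n), 0 < ‖x‖ → ‖x‖ < R₂ →
      DifferentiableAt ℝ u x ∧
      ‖gradient u x‖ ^ (p - 2) • gradient u x = Gbar ‖x‖ • x ∧
      DifferentiableAt ℝ
        (fun y : EuclideanSpace ℝ (Fin n) => ‖gradient u y‖ ^ (p - 2) • gradient u y) x ∧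
      LinearMap.trace ℝ (EuclideanSpace ℝ (Fin n))
        (fderiv ℝ
          (fun y : EuclideanSpace ℝ (Fin n) => ‖gradient u y‖ ^ (p - 2) • gradient u y)
          x).toLinearMap = f ‖x‖) := by
  have hG : ∀ r ∈ Ioc (0:ℝ) R₂, Gbar r = 1 / r ^ n * ∫ ρ in (0:ℝ)..r, f ρ * ρ ^ (n - 1) := by
    intro r hr
    have hR₂ : 0 < R₂ := hr.1.trans_le hr.2
    have hint {a b : ℝ} (ha : a ∈ Icc 0 R₂) (hb : b ∈ Icc 0 R₂) :
        IntervalIntegrable (fun ρ => f ρ * ρ ^ (n - 1)) MeasureTheory.volume a b :=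
      ((hf.mul (continuous_pow _).continuousOn).mono (uIcc_subset_Icc ha hb)).intervalIntegrable
    rw [hGbar, hD₁, ← integral_add_adjacent_intervals
      (hint ⟨le_rfl, hR₂.le⟩ (Ioc_subset_Icc_self hr))
      (hint (Ioc_subset_Icc_self hr) ⟨hR₂.le, le_rfl⟩)]
    field_simp
    ring
  have hG' : ∀ r ∈ Ioc (0:ℝ) R₂,
      HasDerivWithinAt Gbar (f r / r - n * Gbar r / r) (Ioc 0 R₂) r := fun r hr => by
    rw [hG r hr]
    exact (hasDerivWithinAt_one_div_pow_mul_integral hn hf hr).congr hG (hG r hr)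
  have hgrad : ∀ y : EuclideanSpace ℝ (Fin n), 0 < ‖y‖ → ‖y‖ < R₂ →
      HasGradientAt u ((signedRpow (1 / (p - 1)) (Gbar ‖y‖ * ‖y‖) / ‖y‖) • y) y :=
    fun y hy₀ hyR => funext hu ▸ hasGradientAt_integral_norm_sign_mul_abs_rpow
      (one_div_pos.mpr (by linarith)) (fun r hr => (hG' r hr).continuousWithinAt) hy₀ hyR
  have hflux : ∀ y : EuclideanSpace ℝ (Fin n), 0 < ‖y‖ → ‖y‖ < R₂ →
      ‖gradient u y‖ ^ (p - 2) • gradient u y = Gbar ‖y‖ • y := fun y hy₀ hyR => by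
    rw [(hgrad y hy₀ hyR).gradient]
    exact norm_rpow_smul_signedRpow_div_norm_smul (by linarith) _ (norm_pos_iff.mp hy₀)
  refine ⟨⟨hG, hG'⟩, fun x hx => by rw [hu, hx, integral_same], fun x hx₀ hxR => ?_⟩
  have hflux_nhds : (fun y => ‖gradient u y‖ ^ (p - 2) • gradient u y) =ᶠ[𝓝 x]
      fun y => Gbar ‖y‖ • y := by
    filter_upwards [(isOpen_Ioo.preimage continuous_norm).mem_nhds ⟨hx₀, hxR⟩] with y hy
    exact hflux y hy.1 hy.2
  have hGx : HasDerivAt Gbar (f ‖x‖ / ‖x‖ - n * Gbar ‖x‖ / ‖x‖) ‖x‖ :=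
    (hG' ‖x‖ ⟨hx₀, hxR.le⟩).hasDerivAt (Ioc_mem_nhds hx₀ hxR)
  have hx : x ≠ 0 := norm_pos_iff.mp hx₀
  refine ⟨(hgrad x hx₀ hxR).differentiableAt, hflux x hx₀ hxR,
    hflux_nhds.differentiableAt_iff.mpr (hGx.hasFDerivAt_smul_self_comp_norm hx).differentiableAt,
    ?_⟩
  rw [hflux_nhds.fderiv_eq, hGx.trace_fderiv_smul_self_comp_norm hx, finrank_euclideanSpace_fin]
  field_simp
  ring

/-- Explicit radially symmetric solution of `div(|∇u|^{p-2}∇u) - f⁻ = 0` on the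
punctured target ball `{0 < |x| < R₂}` (Theorem 1.1, disjoint-balls case, target ball). -/
theorem pLaplacian_explicit_solution_target_ball (n : ℕ) (hn : 1 ≤ n) (p : ℝ) (hp : 2 < p)
    (R₂ : ℝ) (hR₂ : 0 < R₂)
    (f : ℝ → ℝ) (hf : ContinuousOn f (Set.Icc 0 R₂))
    (D₁ : ℝ) (hD₁ : D₁ = (1 / R₂ ^ n) * ∫ ρ in (0:ℝ)..R₂, f ρ * ρ ^ (n - 1))
    (Gbar : ℝ → ℝ)
    (hGbar : ∀ r, Gbar r = D₁ * R₂ ^ n / r ^ n -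
      (1 / r ^ n) * ∫ ρ in r..R₂, f ρ * ρ ^ (n - 1))
    (u : EuclideanSpace ℝ (Fin n) → ℝ)
    (hu : ∀ x, u x = ∫ ρ in R₂..‖x‖,
      Real.sign (Gbar ρ) * |Gbar ρ * ρ| ^ (1 / (p - 1))) :
    -- (i) alternative formula and ODE for `Ḡ`
    ((∀ r ∈ Set.Ioc (0:ℝ) R₂,
        Gbar r = (1 / r ^ n) * ∫ ρ in (0:ℝ)..r, f ρ * ρ ^ (n - 1)) ∧
      ∀ r ∈ Set.Ioc (0:ℝ) R₂,
        HasDerivWithinAt Gbar (f r / r - n * Gbar r / r) (Set.Ioc (0:ℝ) R₂) r) ∧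
    -- (ii) boundary condition
    (∀ x : EuclideanSpace ℝ (Fin n), ‖x‖ = R₂ → u x = 0) ∧
    -- (iii) differentiability, flux identity and divergence
    (∀ x : EuclideanSpace ℝ (Fin n), 0 < ‖x‖ → ‖x‖ < R₂ →
      DifferentiableAt ℝ u x ∧
      ‖gradient u x‖ ^ (p - 2) • gradient u x = Gbar ‖x‖ • x ∧
      DifferentiableAt ℝ
        (fun y : EuclideanSpace ℝ (Fin n) => ‖gradient u y‖ ^ (p - 2) • gradient u y) x ∧
      LinearMap.trace ℝ (EuclideanSpace ℝ (Fin n))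
        (fderiv ℝ
          (fun y : EuclideanSpace ℝ (Fin n) => ‖gradient u y‖ ^ (p - 2) • gradient u y)
          x).toLinearMap = f ‖x‖) :=
  pLaplacian_explicit_solution_target_ball_general n hn p hp R₂ f hf D₁ hD₁ Gbar hGbar u hu
end

section
/- Let p > 2 be a real number and θ ∈ ℝ with θ ≠ 0. Define g : (0,∞) → ℝ by g(ζ) := θ²/(4ζ) + (1 − 2/p)·2^{2/(p−2)}·ζ^{p/(p−2)}. Then ζ̄ := (1/2)·(θ²)^{(p−2)/(2p−2)} is the unique positive solution of the dual algebraic equation θ² = (2ζ)^{(2p−2)/(p−2)}, g is differentiable on (0,∞) with g'(ζ̄) = 0, and ζ̄ is the unique global minimizer of g on (0,∞): g(ζ) > g(ζ̄) for every ζ > 0 with ζ ≠ ζ̄. -/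
/-!
Put `a = 2/(p-2)`. Since `p/(p-2) = a + 1` and `1 - 2/p = 1/(a+1)`, the integrand is
`g ζ = θ²/(4ζ) + 2^a ζ^(a+1)/(a+1)`, whose derivative is `((2ζ)^(a+2) - θ²)/(4ζ²)`. The dual
algebraic equation `θ² = (2ζ)^(a+2)` is inverted by an `(a+2)`-th root, and as `(2ζ)^(a+2)` is
strictly increasing, `g'` is negative to the left of its root `ζ̄` and positive to the right, so
`ζ̄` is the strict global minimizer of `g` on `(0,∞)`.
-/

open Real Set

theorem apply_lt_apply_of_hasDerivAt_neg_of_pos {f f' : ℝ → ℝ} {s : Set ℝ} [s.OrdConnected]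
    {c x : ℝ} (hc : c ∈ s) (hx : x ∈ s) (hxc : x ≠ c)
    (hf : ∀ y ∈ s, HasDerivAt f (f' y) y)
    (hneg : ∀ y ∈ s, y < c → f' y < 0) (hpos : ∀ y ∈ s, c < y → 0 < f' y) :
    f c < f x := by
  have hcont : ∀ {a b}, a ∈ s → b ∈ s → ContinuousOn f (Icc a b) := fun ha hb y hy =>
    (hf y (Set.Icc_subset s ha hb hy)).continuousAt.continuousWithinAt
  rcases hxc.lt_or_gt with hlt | hgt
  · refine strictAntiOn_of_deriv_neg (convex_Icc x c) (hcont hx hc) (fun y hy => ?_)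
      (left_mem_Icc.2 hlt.le) (right_mem_Icc.2 hlt.le) hlt
    rw [interior_Icc] at hy
    have hys : y ∈ s := Set.Icc_subset s hx hc (Ioo_subset_Icc_self hy)
    exact (hf y hys).deriv ▸ hneg y hys hy.2
  · refine strictMonoOn_of_deriv_pos (convex_Icc c x) (hcont hc hx) (fun y hy => ?_)
      (left_mem_Icc.2 hgt.le) (right_mem_Icc.2 hgt.le) hgt
    rw [interior_Icc] at hy
    have hys : y ∈ s := Set.Icc_subset s hc hx (Ioo_subset_Icc_self hy)
    exact (hf y hys).deriv ▸ hpos y hys hy.1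

theorem eq_two_mul_rpow_iff {c ζ q : ℝ} (hc : 0 ≤ c) (hζ : 0 ≤ ζ) (hq : q ≠ 0) :
    c = (2 * ζ) ^ q ↔ ζ = c ^ q⁻¹ / 2 := by
  rw [eq_div_iff two_ne_zero, mul_comm ζ 2, eq_rpow_inv (by positivity) hc hq, eq_comm]

noncomputable def dualIntegrand (a c ζ : ℝ) : ℝ := c / (4 * ζ) + 2 ^ a * ζ ^ (a + 1) / (a + 1)

theorem two_mul_rpow_add_two {x : ℝ} (hx : 0 < x) (a : ℝ) :
    (2 * x) ^ (a + 2) = 2 ^ a * x ^ a * (4 * x ^ 2) := by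
  rw [rpow_add (by positivity), mul_rpow zero_le_two hx.le, rpow_two]
  ring

theorem hasDerivAt_dualIntegrand {a : ℝ} (ha : a + 1 ≠ 0) (c : ℝ) {x : ℝ} (hx : 0 < x) :
    HasDerivAt (dualIntegrand a c) (((2 * x) ^ (a + 2) - c) / (4 * x ^ 2)) x := by
  have hlin : HasDerivAt (fun ζ : ℝ => 4 * ζ) 4 x := by
    simpa using (hasDerivAt_id x).const_mul (4 : ℝ)
  have hpow := (hasDerivAt_rpow_const (p := a + 1) (Or.inl hx.ne')).const_mul (2 ^ a)
  refine (((hasDerivAt_const x c).div hlin (by positivity)).add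
    (hpow.div_const (a + 1))).congr_deriv ?_
  rw [two_mul_rpow_add_two hx, add_sub_cancel_right]
  field_simp
  ring

theorem dualIntegrand_lt_of_ne {a ζ₀ x : ℝ} (ha₁ : a + 1 ≠ 0) (ha₂ : 0 < a + 2)
    (hζ₀ : 0 < ζ₀) (hx : 0 < x) (hne : x ≠ ζ₀) :
    dualIntegrand a ((2 * ζ₀) ^ (a + 2)) ζ₀ < dualIntegrand a ((2 * ζ₀) ^ (a + 2)) x :=
  apply_lt_apply_of_hasDerivAt_neg_of_pos (s := Ioi 0) hζ₀ hx hne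
    (fun _ hy => hasDerivAt_dualIntegrand ha₁ _ hy)
    (fun y (hy : 0 < y) hlt => div_neg_of_neg_of_pos
      (sub_neg.2 (rpow_lt_rpow (by positivity) (by linarith) ha₂)) (by positivity))
    (fun y (hy : 0 < y) hlt => div_pos
      (sub_pos.2 (rpow_lt_rpow (by positivity) (by linarith) ha₂)) (by positivity))

/-- Pointwise form of the dual algebraic equation (Lemma 2.6): for `θ ≠ 0`,
`ζ̄ = (1/2)(θ²)^{(p-2)/(2p-2)}` is the unique positive solution of
`θ² = (2ζ)^{(2p-2)/(p-2)}`, it is a critical point of the dual integrand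
`g(ζ) = θ²/(4ζ) + (1-2/p)2^{2/(p-2)}ζ^{p/(p-2)}`, and it is the unique global
minimizer of `g` on `(0,∞)`. -/
theorem dual_algebraic_equation (p : ℝ) (hp : 2 < p) (θ : ℝ) (hθ : θ ≠ 0)
    (g : ℝ → ℝ)
    (hg : ∀ ζ : ℝ, g ζ =
      θ ^ 2 / (4 * ζ) + (1 - 2 / p) * (2:ℝ) ^ (2 / (p - 2)) * ζ ^ (p / (p - 2)))
    (ζ' : ℝ) (hζ' : ζ' = (θ ^ 2) ^ ((p - 2) / (2 * p - 2)) / 2) :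
    (0 < ζ' ∧ θ ^ 2 = (2 * ζ') ^ ((2 * p - 2) / (p - 2)) ∧
      ∀ ζ : ℝ, 0 < ζ → θ ^ 2 = (2 * ζ) ^ ((2 * p - 2) / (p - 2)) → ζ = ζ') ∧
    (∀ ζ : ℝ, 0 < ζ → DifferentiableAt ℝ g ζ) ∧
    deriv g ζ' = 0 ∧
    (∀ ζ : ℝ, 0 < ζ → ζ ≠ ζ' → g ζ' < g ζ) := by
  have hp₂ : p - 2 ≠ 0 := by linarith
  have hq : (2 * p - 2) / (p - 2) = 2 / (p - 2) + 2 := by field_simp; ring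
  have hexp : p / (p - 2) = 2 / (p - 2) + 1 := by field_simp; ring
  have hcoef : 1 - 2 / p = (2 / (p - 2) + 1)⁻¹ := by rw [← hexp]; field_simp
  set a := 2 / (p - 2)
  have ha : 0 < a := div_pos two_pos (by linarith)
  have hg : g = dualIntegrand a (θ ^ 2) := funext fun ζ => by
    rw [hg, dualIntegrand, hcoef, hexp]
    ring
  rw [← inv_div (2 * p - 2), hq] at hζ'
  rw [hq, hg]
  have hc : 0 ≤ θ ^ 2 := sq_nonneg θ
  have hζ'pos : 0 < ζ' := hζ' ▸ by positivity
  have hsol : θ ^ 2 = (2 * ζ') ^ (a + 2) :=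
    (eq_two_mul_rpow_iff hc hζ'pos.le (by positivity)).2 hζ'
  refine ⟨⟨hζ'pos, hsol, fun ζ hζ h => hζ' ▸ (eq_two_mul_rpow_iff hc hζ.le (by positivity)).1 h⟩,
    fun ζ hζ => (hasDerivAt_dualIntegrand (by positivity) _ hζ).differentiableAt, ?_,
    fun ζ hζ hne => hsol ▸ dualIntegrand_lt_of_ne (by positivity) (by positivity) hζ'pos hζ hne⟩
  rw [(hasDerivAt_dualIntegrand (by positivity) _ hζ'pos).deriv, ← hsol, sub_self, zero_div]
end

section
/- Let n ≥ 1 be an integer, 0 < R₂ < R₁, and let f⁺ : [R₂,R₁] → ℝ be continuous with f⁺(r) > 0 for all r ∈ [R₂,R₁] and satisfying ∫_{R₂}^{R₁} f⁺(r)r^{n−1} dr = Γ(n/2)/(2π^{n/2}). For p > 2, t ∈ ℝ and ρ ∈ [R₂,R₁] define F(ρ,t) := (t·R₂ⁿ − ∫_{R₂}^ρ f⁺(r)r^{n−1} dr)/ρⁿ, M_p(t) := ∫_{R₂}^{R₁} sgn(F(ρ,t))·|F(ρ,t)·ρ|^{1/(p−1)} dρ, and let C_p be the unique real number with M_p(C_p)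 = 0. Then C_p converges as p → +∞, with lim_{p→+∞} C_p = (1/R₂ⁿ)∫_{R₂}^{(R₁+R₂)/2} f⁺(ρ)ρ^{n−1} dρ, i.e. lim_{p→+∞} C_p = F̃((R₁+R₂)/2) where F̃(r) := (1/R₂ⁿ)∫_{R₂}^r f⁺(ρ)ρ^{n−1} dρ. -/
open MeasureTheory Set Filter

lemma aux_measurable_sign : Measurable Real.sign := by
  unfold Real.sign
  exact Measurable.ite (measurableSet_lt measurable_id measurable_const) measurable_const
    (Measurable.ite (measurableSet_lt measurable_const measurable_id) measurable_const
      measurable_const)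

lemma aux_abs_sign_le (x : ℝ) : |Real.sign x| ≤ 1 := by
  rcases lt_trichotomy x 0 with h | h | h
  · rw [Real.sign_of_neg h]; norm_num
  · simp [h]
  · rw [Real.sign_of_pos h]; norm_num

lemma aux_sign_div {x c : ℝ} (hc : 0 < c) : Real.sign (x / c) = Real.sign x := by
  rcases lt_trichotomy x 0 with h | h | h
  · rw [Real.sign_of_neg h, Real.sign_of_neg (div_neg_of_neg_of_pos h hc)]
  · simp [h]
  · rw [Real.sign_of_pos h, Real.sign_of_pos (div_pos h hc)]

lemma aux_sgnpow_mono {q : ℝ} (hq : 0 < q) :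
    Monotone (fun s : ℝ => Real.sign s * |s| ^ q) := by
  intro a b hab
  rcases le_or_gt b 0 with hb | hb
  · rcases eq_or_lt_of_le hab with rfl | hab'
    · exact le_rfl
    rcases eq_or_lt_of_le hb with rfl | hb'
    · simp only [Real.sign_zero, zero_mul]
      rw [Real.sign_of_neg hab']
      nlinarith [Real.rpow_nonneg (abs_nonneg a) q]
    · simp only
      rw [Real.sign_of_neg hb', Real.sign_of_neg (hab'.trans hb')]
      have h1 : |b| ^ q ≤ |a| ^ q := by
        apply Real.rpow_le_rpow (abs_nonneg b) _ hq.le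
        rw [abs_of_neg hb', abs_of_neg (hab'.trans hb')]; linarith
      nlinarith
  · have hgb : 0 ≤ Real.sign b * |b| ^ q := by
      rw [Real.sign_of_pos hb, one_mul]; exact Real.rpow_nonneg (abs_nonneg b) q
    rcases le_or_gt a 0 with ha | ha
    · have hga : Real.sign a * |a| ^ q ≤ 0 := by
        rcases eq_or_lt_of_le ha with rfl | ha'
        · simp
        · rw [Real.sign_of_neg ha']
          nlinarith [Real.rpow_nonneg (abs_nonneg a) q]
      exact hga.trans hgb
    · simp only
      rw [Real.sign_of_pos ha, Real.sign_of_pos hb, one_mul, one_mul]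
      apply Real.rpow_le_rpow (abs_nonneg a) _ hq.le
      rw [abs_of_pos ha, abs_of_pos hb]; exact hab

lemma aux_rpow_le_max {a q : ℝ} (ha : 0 ≤ a) (hq0 : 0 < q) (hq1 : q ≤ 1) :
    a ^ q ≤ max 1 a := by
  rcases le_or_gt a 1 with h | h
  · exact le_max_of_le_left (Real.rpow_le_one ha h hq0.le)
  · calc a ^ q ≤ a ^ (1 : ℝ) := Real.rpow_le_rpow_of_exponent_le h.le hq1
      _ = a := Real.rpow_one a
      _ ≤ max 1 a := le_max_right _ _

/-- Asymptotics of the free constant in the annulus case of Theorem 1.1: if for each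
`p > 2`, `C p` is a zero of the boundary-value map `M_p`, then
`C p → F̃((R₁+R₂)/2) = (1/R₂ⁿ)∫_{R₂}^{(R₁+R₂)/2} f⁺(ρ)ρ^{n-1} dρ` as `p → +∞`. -/
theorem Cp_limit (n : ℕ) (hn : 1 ≤ n) (R₂ R₁ : ℝ)
    (hR₂ : 0 < R₂) (hR : R₂ < R₁)
    (f : ℝ → ℝ) (hf : ContinuousOn f (Set.Icc R₂ R₁))
    (hfpos : ∀ r ∈ Set.Icc R₂ R₁, 0 < f r)
    (hbal : ∫ r in R₂..R₁, f r * r ^ (n - 1) =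
      Real.Gamma ((n : ℝ) / 2) / (2 * Real.pi ^ ((n : ℝ) / 2)))
    (F : ℝ → ℝ → ℝ)
    (hF : ∀ ρ t, F ρ t = (t * R₂ ^ n - ∫ r in R₂..ρ, f r * r ^ (n - 1)) / ρ ^ n)
    (M : ℝ → ℝ → ℝ)
    (hM : ∀ p t, M p t = ∫ ρ in R₂..R₁,
      Real.sign (F ρ t) * |F ρ t * ρ| ^ (1 / (p - 1)))
    (C : ℝ → ℝ)
    (hC : ∀ p : ℝ, 2 < p → M p (C p) = 0) :
    Filter.Tendsto C Filter.atTop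
      (nhds ((1 / R₂ ^ n) * ∫ ρ in R₂..((R₁ + R₂) / 2), f ρ * ρ ^ (n - 1))) := by
  classical
  set mid : ℝ := (R₁ + R₂) / 2 with hmid_def
  have hmid₁ : R₂ < mid := by rw [hmid_def]; linarith
  have hmid₂ : mid < R₁ := by rw [hmid_def]; linarith
  have hRn : (0:ℝ) < R₂ ^ n := pow_pos hR₂ n
  -- continuous extension of `f` and the primitive `Gc`
  set fc : ℝ → ℝ := fun r => f (max R₂ (min r R₁)) with hfc_def
  have hproj : ∀ r : ℝ, max R₂ (min r R₁) ∈ Icc R₂ R₁ := fun r =>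
    ⟨le_max_left _ _, max_le hR.le (min_le_right _ _)⟩
  have hfc_cont : Continuous fc :=
    hf.comp_continuous (continuous_const.max (continuous_id.min continuous_const)) hproj
  set g : ℝ → ℝ := fun r => fc r * r ^ (n - 1) with hg_def
  have hg_cont : Continuous g := hfc_cont.mul (continuous_pow _)
  set Gc : ℝ → ℝ := fun ρ => ∫ r in R₂..ρ, g r with hGc_def
  have hGc : Continuous Gc :=
    intervalIntegral.continuous_primitive (fun a b => hg_cont.intervalIntegrable a b) R₂
  have hfc_eq : ∀ r ∈ Icc R₂ R₁, fc r = f r := by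
    intro r hr
    rw [hfc_def]
    simp only
    rw [min_eq_left hr.2, max_eq_right hr.1]
  have G_eq : ∀ ρ ∈ Icc R₂ R₁, (∫ r in R₂..ρ, f r * r ^ (n - 1)) = Gc ρ := by
    intro ρ hρ
    apply intervalIntegral.integral_congr
    intro r hr
    rw [uIcc_of_le hρ.1] at hr
    have hr' : r ∈ Icc R₂ R₁ := ⟨hr.1, hr.2.trans hρ.2⟩
    simp only [hg_def]
    rw [hfc_eq r hr']
  have hGpos : ∀ a b : ℝ, R₂ ≤ a → a < b → b ≤ R₁ → Gc a < Gc b := by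
    intro a b ha hab hb
    have h1 : Gc a + ∫ r in a..b, g r = Gc b :=
      intervalIntegral.integral_add_adjacent_intervals
        (hg_cont.intervalIntegrable _ _) (hg_cont.intervalIntegrable _ _)
    have h2 : 0 < ∫ r in a..b, g r := by
      apply intervalIntegral.intervalIntegral_pos_of_pos_on
        (hg_cont.intervalIntegrable _ _) _ hab
      intro x hx
      have hx0 : 0 < x := lt_of_lt_of_le hR₂ (ha.trans hx.1.le)
      exact mul_pos (hfpos _ (hproj x)) (pow_pos hx0 _)
    linarith
  have hGR₂ : Gc R₂ = 0 := intervalIntegral.integral_same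
  -- basic facts about `F`
  have hFh : ∀ t : ℝ, ∀ ρ ∈ Icc R₂ R₁, F ρ t = (t * R₂ ^ n - Gc ρ) / ρ ^ n := by
    intro t ρ hρ
    rw [hF, G_eq ρ hρ]
  have hmeasF : ∀ s : ℝ, Measurable (fun ρ : ℝ => (s - Gc ρ) / ρ ^ n) :=
    fun s => (measurable_const.sub hGc.measurable).div (continuous_pow n).measurable
  -- measurability of the integrand
  have hmeasI : ∀ (t q : ℝ), 0 ≤ q → AEStronglyMeasurable
      (fun ρ => Real.sign (F ρ t) * |F ρ t * ρ| ^ q) (volume.restrict (Ioc R₂ R₁)) := by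
    intro t q hq
    have hψ : Measurable (fun ρ : ℝ =>
        Real.sign ((t * R₂ ^ n - Gc ρ) / ρ ^ n) * |(t * R₂ ^ n - Gc ρ) / ρ ^ n * ρ| ^ q) := by
      apply Measurable.mul
      · exact aux_measurable_sign.comp (hmeasF _)
      · exact (Real.continuous_rpow_const hq).measurable.comp ((hmeasF _).mul measurable_id).abs
    refine hψ.aestronglyMeasurable.congr ?_
    rw [Filter.EventuallyEq, ae_restrict_iff' measurableSet_Ioc]
    refine ae_of_all _ fun ρ hρ => ?_
    rw [hFh t ρ (Ioc_subset_Icc_self hρ)]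
  -- bound for the integrand
  have hboundF : ∀ t : ℝ, ∃ B : ℝ, ∀ ρ ∈ Icc R₂ R₁, |F ρ t * ρ| ≤ B := by
    intro t
    have hcont : ContinuousOn (fun ρ : ℝ => (t * R₂ ^ n - Gc ρ) / ρ ^ n * ρ) (Icc R₂ R₁) := by
      apply ContinuousOn.mul _ continuousOn_id
      exact (continuous_const.sub hGc).continuousOn.div (continuous_pow n).continuousOn
        (fun ρ hρ => pow_ne_zero _ (ne_of_gt (lt_of_lt_of_le hR₂ hρ.1)))
    obtain ⟨B, hB⟩ := isCompact_Icc.exists_bound_of_continuousOn hcont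
    refine ⟨B, fun ρ hρ => ?_⟩
    rw [hFh t ρ hρ]
    simpa only [Real.norm_eq_abs] using hB ρ hρ
  have hnormI : ∀ (t B : ℝ), (∀ ρ ∈ Icc R₂ R₁, |F ρ t * ρ| ≤ B) → ∀ q : ℝ, 0 < q → q ≤ 1 →
      ∀ ρ ∈ Ioc R₂ R₁, ‖Real.sign (F ρ t) * |F ρ t * ρ| ^ q‖ ≤ max 1 B := by
    intro t B hB q hq0 hq1 ρ hρ
    have h1 : |F ρ t * ρ| ^ q ≤ max 1 B := by
      calc |F ρ t * ρ| ^ q ≤ max 1 |F ρ t * ρ| := aux_rpow_le_max (abs_nonneg _) hq0 hq1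
        _ ≤ max 1 B := max_le_max le_rfl (hB ρ (Ioc_subset_Icc_self hρ))
    have h2 : (0:ℝ) ≤ |F ρ t * ρ| ^ q := Real.rpow_nonneg (abs_nonneg _) q
    rw [Real.norm_eq_abs, abs_mul, abs_of_nonneg h2]
    calc |Real.sign (F ρ t)| * |F ρ t * ρ| ^ q
        ≤ 1 * |F ρ t * ρ| ^ q := mul_le_mul_of_nonneg_right (aux_abs_sign_le _) h2
      _ = |F ρ t * ρ| ^ q := one_mul _
      _ ≤ max 1 B := h1
  -- integrability of the integrand
  have hintI : ∀ (t q : ℝ), 0 < q → q ≤ 1 →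
      IntervalIntegrable (fun ρ => Real.sign (F ρ t) * |F ρ t * ρ| ^ q) volume R₂ R₁ := by
    intro t q hq0 hq1
    obtain ⟨B, hB⟩ := hboundF t
    rw [intervalIntegrable_iff_integrableOn_Ioc_of_le hR.le]
    have hconst : IntegrableOn (fun _ : ℝ => max 1 B) (Ioc R₂ R₁) volume :=
      integrableOn_const measure_Ioc_lt_top.ne
    exact hconst.mono' (hmeasI t q hq0.le)
      ((ae_restrict_iff' measurableSet_Ioc).2 (ae_of_all _ (hnormI t B hB q hq0 hq1)))
  -- monotonicity of `M p` in `t`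
  have hmono : ∀ p : ℝ, 2 < p → ∀ t₁ t₂ : ℝ, t₁ ≤ t₂ → M p t₁ ≤ M p t₂ := by
    intro p hp t₁ t₂ ht
    have hq0 : 0 < 1/(p-1) := div_pos one_pos (by linarith)
    have hq1 : 1/(p-1) ≤ 1 := by rw [div_le_one (by linarith)]; linarith
    rw [hM p t₁, hM p t₂]
    apply intervalIntegral.integral_mono_on hR.le (hintI t₁ _ hq0 hq1) (hintI t₂ _ hq0 hq1)
    intro ρ hρ
    have hρ0 : 0 < ρ := lt_of_lt_of_le hR₂ hρ.1
    have hFle : F ρ t₁ ≤ F ρ t₂ := by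
      rw [hF ρ t₁, hF ρ t₂]
      apply div_le_div_of_nonneg_right _ (pow_nonneg hρ0.le n)
      have := mul_le_mul_of_nonneg_right ht hRn.le
      linarith
    have habs : ∀ t' : ℝ, |F ρ t' * ρ| ^ (1/(p-1)) = |F ρ t'| ^ (1/(p-1)) * ρ ^ (1/(p-1)) := by
      intro t'
      rw [abs_mul, abs_of_pos hρ0, Real.mul_rpow (abs_nonneg _) hρ0.le]
    rw [habs t₁, habs t₂]
    calc Real.sign (F ρ t₁) * (|F ρ t₁| ^ (1/(p-1)) * ρ ^ (1/(p-1)))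
        = (Real.sign (F ρ t₁) * |F ρ t₁| ^ (1/(p-1))) * ρ ^ (1/(p-1)) := by ring
      _ ≤ (Real.sign (F ρ t₂) * |F ρ t₂| ^ (1/(p-1))) * ρ ^ (1/(p-1)) :=
          mul_le_mul_of_nonneg_right (aux_sgnpow_mono hq0 hFle) (Real.rpow_nonneg hρ0.le _)
      _ = Real.sign (F ρ t₂) * (|F ρ t₂| ^ (1/(p-1)) * ρ ^ (1/(p-1))) := by ring
  -- the limit of `M p t` for a sign-change radius `ρ₀`
  have hmain : ∀ t ρ₀ : ℝ, R₂ ≤ ρ₀ → ρ₀ ≤ R₁ → Gc ρ₀ = t * R₂ ^ n →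
      Tendsto (fun p => M p t) atTop (nhds (2*ρ₀ - (R₁+R₂))) := by
    intro t ρ₀ h1 h2 hval
    obtain ⟨B, hB⟩ := hboundF t
    set φ : ℝ → ℝ := fun ρ => Real.sign ((t * R₂ ^ n - Gc ρ) / ρ ^ n) with hφ_def
    have hφmeas : Measurable φ := aux_measurable_sign.comp (hmeasF _)
    have hφeq : ∀ ρ ∈ Icc R₂ R₁, φ ρ = Real.sign (t * R₂ ^ n - Gc ρ) := by
      intro ρ hρ
      exact aux_sign_div (pow_pos (lt_of_lt_of_le hR₂ hρ.1) n)
    have hDCT : Tendsto (fun p => M p t) atTop (nhds (∫ ρ in Ioc R₂ R₁, φ ρ)) := by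
      have hMeq : (fun p => M p t) = fun p => ∫ ρ in Ioc R₂ R₁,
          Real.sign (F ρ t) * |F ρ t * ρ| ^ (1/(p-1)) := by
        funext p
        rw [hM p t, intervalIntegral.integral_of_le hR.le]
      rw [hMeq]
      apply tendsto_integral_filter_of_dominated_convergence (fun _ => max 1 B)
      · filter_upwards [eventually_ge_atTop (2:ℝ)] with p hp
        exact hmeasI t _ (div_nonneg (by norm_num) (by linarith))
      · filter_upwards [eventually_ge_atTop (2:ℝ)] with p hp
        have hq0 : 0 < 1/(p-1) := div_pos one_pos (by linarith)
        have hq1 : 1/(p-1) ≤ 1 := by rw [div_le_one (by linarith)]; linarith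
        exact (ae_restrict_iff' measurableSet_Ioc).2 (ae_of_all _ (hnormI t B hB _ hq0 hq1))
      · exact integrableOn_const measure_Ioc_lt_top.ne
      · rw [ae_restrict_iff' measurableSet_Ioc]
        refine ae_of_all _ fun ρ hρ => ?_
        have hρIcc : ρ ∈ Icc R₂ R₁ := Ioc_subset_Icc_self hρ
        have hFr : F ρ t = (t * R₂ ^ n - Gc ρ) / ρ ^ n := hFh t ρ hρIcc
        rcases eq_or_ne (F ρ t) 0 with hz | hz
        · have hφ0 : φ ρ = 0 := by
            simp only [hφ_def]
            rw [← hFr, hz, Real.sign_zero]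
          simp only [hz, Real.sign_zero, zero_mul, hφ0]
          exact tendsto_const_nhds
        · have ha : 0 < |F ρ t * ρ| :=
            abs_pos.2 (mul_ne_zero hz (ne_of_gt (lt_of_lt_of_le hR₂ hρIcc.1)))
          have hqlim : Tendsto (fun p : ℝ => 1/(p-1)) atTop (nhds 0) := by
            have h1' : Tendsto (fun p : ℝ => p - 1) atTop atTop :=
              tendsto_atTop_add_const_right atTop (-1) tendsto_id
            simpa [one_div, Function.comp_def] using tendsto_inv_atTop_zero.comp h1'
          have hpow : Tendsto (fun p : ℝ => |F ρ t * ρ| ^ (1/(p-1))) atTop (nhds 1) := by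
            have := (Real.continuousAt_const_rpow (a := |F ρ t * ρ|) (b := 0)
              (ne_of_gt ha)).tendsto.comp hqlim
            simpa [Real.rpow_zero, Function.comp_def] using this
          have hlim : Tendsto (fun p : ℝ => Real.sign (F ρ t) * |F ρ t * ρ| ^ (1/(p-1)))
              atTop (nhds (Real.sign (F ρ t) * 1)) := tendsto_const_nhds.mul hpow
          rw [mul_one] at hlim
          have hφρ : φ ρ = Real.sign (F ρ t) := by
            simp only [hφ_def]
            rw [← hFr]
          rw [hφρ]
          exact hlim
    have hval' : ∫ ρ in Ioc R₂ R₁, φ ρ = 2*ρ₀ - (R₁+R₂) := by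
      have hsplit : Ioc R₂ R₁ = Ioc R₂ ρ₀ ∪ Ioc ρ₀ R₁ := (Ioc_union_Ioc_eq_Ioc h1 h2).symm
      have hφint : ∀ a b : ℝ, IntegrableOn φ (Ioc a b) volume := by
        intro a b
        apply Measure.integrableOn_of_bounded (M := 1) measure_Ioc_lt_top.ne
          hφmeas.aestronglyMeasurable
        refine ae_of_all _ fun ρ => ?_
        rw [Real.norm_eq_abs]
        exact aux_abs_sign_le _
      rw [hsplit, setIntegral_union (Ioc_disjoint_Ioc_of_le le_rfl) measurableSet_Ioc
        (hφint _ _) (hφint _ _)]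
      have hI1 : ∫ ρ in Ioc R₂ ρ₀, φ ρ = ρ₀ - R₂ := by
        have he : ∫ ρ in Ioc R₂ ρ₀, φ ρ = ∫ _ρ in Ioc R₂ ρ₀, (1:ℝ) := by
          apply setIntegral_congr_ae measurableSet_Ioc
          have hne : ∀ᵐ x : ℝ ∂volume, x ≠ ρ₀ := by
            refine ae_iff.2 ?_
            simp only [not_not, setOf_eq_eq_singleton]
            exact measure_singleton ρ₀
          filter_upwards [hne] with x hx hmem
          have hx1 : x < ρ₀ := lt_of_le_of_ne hmem.2 hx
          have hxIcc : x ∈ Icc R₂ R₁ := ⟨hmem.1.le, le_trans hmem.2 h2⟩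
          have hGlt : Gc x < Gc ρ₀ := hGpos x ρ₀ hmem.1.le hx1 h2
          have hpos : 0 < t * R₂ ^ n - Gc x := by rw [← hval]; linarith
          rw [hφeq x hxIcc, Real.sign_of_pos hpos]
        rw [he, setIntegral_const, measureReal_def, Real.volume_Ioc, smul_eq_mul, mul_one,
          ENNReal.toReal_ofReal (by linarith)]
      have hI2 : ∫ ρ in Ioc ρ₀ R₁, φ ρ = -(R₁ - ρ₀) := by
        have he : ∫ ρ in Ioc ρ₀ R₁, φ ρ = ∫ _ρ in Ioc ρ₀ R₁, (-1:ℝ) := by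
          apply setIntegral_congr_ae measurableSet_Ioc
          refine ae_of_all _ fun x hmem => ?_
          have hxIcc : x ∈ Icc R₂ R₁ := ⟨le_trans h1 hmem.1.le, hmem.2⟩
          have hGlt : Gc ρ₀ < Gc x := hGpos ρ₀ x h1 hmem.1 hmem.2
          have hneg : t * R₂ ^ n - Gc x < 0 := by rw [← hval]; linarith
          rw [hφeq x hxIcc, Real.sign_of_neg hneg]
        rw [he, setIntegral_const, measureReal_def, Real.volume_Ioc, smul_eq_mul,
          ENNReal.toReal_ofReal (by linarith)]
        ring
      rw [hI1, hI2]; ring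
    rw [← hval']
    exact hDCT
  -- identify the target constant
  have hGmidpos : 0 < Gc mid := by
    have := hGpos R₂ mid le_rfl hmid₁ hmid₂.le
    linarith [hGR₂ ▸ this]
  rw [G_eq mid ⟨hmid₁.le, hmid₂.le⟩]
  set tstar : ℝ := (1 / R₂ ^ n) * Gc mid with htstar
  have hts : tstar * R₂ ^ n = Gc mid := by
    rw [htstar]; field_simp
  apply tendsto_order.2
  constructor
  · -- lower bound
    intro a ha
    have htpos : 0 < tstar := by
      rw [htstar]; positivity
    set t₁ := max a (tstar/2) with ht₁
    have ht₁a : a ≤ t₁ := le_max_left _ _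
    have ht₁lt : t₁ < tstar := max_lt ha (by linarith)
    have hs₁pos : 0 < t₁ * R₂ ^ n :=
      mul_pos (lt_of_lt_of_le (by linarith : (0:ℝ) < tstar/2) (le_max_right _ _)) hRn
    have hs₁lt : t₁ * R₂ ^ n < Gc mid := by
      rw [← hts]; exact mul_lt_mul_of_pos_right ht₁lt hRn
    have hmem : t₁ * R₂ ^ n ∈ Icc (Gc R₂) (Gc mid) := ⟨by rw [hGR₂]; exact hs₁pos.le, hs₁lt.le⟩
    obtain ⟨ρ₁, hρ₁mem, hρ₁val⟩ := intermediate_value_Icc hmid₁.le hGc.continuousOn hmem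
    have hρ₁R₁ : ρ₁ ≤ R₁ := le_trans hρ₁mem.2 hmid₂.le
    have hρ₁lt : ρ₁ < mid := by
      rcases lt_or_eq_of_le hρ₁mem.2 with h | h
      · exact h
      · exfalso; rw [h] at hρ₁val; rw [hρ₁val] at hs₁lt; exact lt_irrefl _ hs₁lt
    have hlim := hmain t₁ ρ₁ hρ₁mem.1 hρ₁R₁ hρ₁val
    have hneg : 2*ρ₁ - (R₁+R₂) < 0 := by
      rw [hmid_def] at hρ₁lt; linarith
    have hev := hlim.eventually_lt_const hneg
    filter_upwards [hev, eventually_gt_atTop (2:ℝ)] with p hp1 hp2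
    by_contra hcon
    push_neg at hcon
    have hle : M p (C p) ≤ M p t₁ := hmono p hp2 _ _ (le_trans hcon ht₁a)
    rw [hC p hp2] at hle
    linarith
  · -- upper bound
    intro a ha
    set T : ℝ := (1 / R₂ ^ n) * Gc R₁ with hT
    have hTs : T * R₂ ^ n = Gc R₁ := by rw [hT]; field_simp
    have hTgt : tstar < T := by
      have h := hGpos mid R₁ hmid₁.le hmid₂ le_rfl
      rw [htstar, hT]
      exact mul_lt_mul_of_pos_left h (by positivity)
    set t₂ := min a ((tstar + T)/2) with ht₂
    have ht₂a : t₂ ≤ a := min_le_left _ _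
    have ht₂gt : tstar < t₂ := lt_min ha (by linarith)
    have ht₂T : t₂ < T := lt_of_le_of_lt (min_le_right _ _) (by linarith)
    have hs₂gt : Gc mid < t₂ * R₂ ^ n := by
      rw [← hts]; exact mul_lt_mul_of_pos_right ht₂gt hRn
    have hs₂lt : t₂ * R₂ ^ n < Gc R₁ := by
      rw [← hTs]; exact mul_lt_mul_of_pos_right ht₂T hRn
    have hmem : t₂ * R₂ ^ n ∈ Icc (Gc mid) (Gc R₁) := ⟨hs₂gt.le, hs₂lt.le⟩
    obtain ⟨ρ₂, hρ₂mem, hρ₂val⟩ := intermediate_value_Icc hmid₂.le hGc.continuousOn hmem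
    have hρ₂R₂ : R₂ ≤ ρ₂ := le_trans hmid₁.le hρ₂mem.1
    have hρ₂gt : mid < ρ₂ := by
      rcases lt_or_eq_of_le hρ₂mem.1 with h | h
      · exact h
      · exfalso; rw [← h] at hρ₂val; rw [hρ₂val] at hs₂gt; exact lt_irrefl _ hs₂gt
    have hlim := hmain t₂ ρ₂ hρ₂R₂ hρ₂mem.2 hρ₂val
    have hpos : 0 < 2*ρ₂ - (R₁+R₂) := by
      rw [hmid_def] at hρ₂gt; linarith
    have hev := hlim.eventually_const_lt hpos
    filter_upwards [hev, eventually_gt_atTop (2:ℝ)] with p hp1 hp2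
    by_contra hcon
    push_neg at hcon
    have hle : M p t₂ ≤ M p (C p) := hmono p hp2 _ _ (le_trans ht₂a hcon)
    rw [hC p hp2] at hle
    linarith
end
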